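/- arXiv:1201.2837 — 4 statements merged into one kernel-verified Lean document; each statement's English description precedes it below -/
import Mathlib

section
/- Let β > −1 with β ≠ 0, let ϵ ∈ ℝ, ν ∈ ℝ, and ω ∈ ℝ. Define w(x) := ω e_z × x and u := u_P + w. Then: (i) div u = 0 at every point of ℝ³; (ii) ε(u)(x) = ε(u_P)(x) for every x ∈ ℝ³, and div ε(u)(x) = 0 for every x; (iii) u(x)·∇φ(x) = 0 for every x ∈ ℝ³, so u is tangent to the boundary of the spheroid Ω_β; (iv) there exists a differentiable function p : ℝ³ → ℝ such that (u·∇)u(x) − 2ν·div ε(u)(x) + 2ϵ e_x × u(x) + ∇p(x) = 0 for every x ∈ ℝ³. In particular, for every viscosity ν and every ω, the field u_P + ω e_z × x is a steady solution of the precessing Navier–Stokes equations in Ω_β satisfying the slip condition and having the same tangential boundary stress as the Poincaré flow; hence the Poincaré flow is not an isolated steady state (it is not an attractor). -/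
open MeasureTheory

noncomputable section

abbrev E3 : Type := Fin 3 → ℝ

/-- standard basis vector -/
def sb (i : Fin 3) : E3 := Pi.single i 1

/-- Euclidean dot product -/
def dot3 (a b : E3) : ℝ := ∑ i, a i * b i

/-- cross product -/
def cross3 (a b : E3) : E3 :=
  ![a 1 * b 2 - a 2 * b 1, a 2 * b 0 - a 0 * b 2, a 0 * b 1 - a 1 * b 0]

/-- Jacobian matrix of a vector field: entry (i,j) is ∂ⱼ uᵢ -/
def jac (u : E3 → E3) (x : E3) : Matrix (Fin 3) (Fin 3) ℝ :=
  fun i j => fderiv ℝ u x (sb j) i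

/-- strain rate tensor ε(u) = ½(Du + Duᵀ) -/
def strain (u : E3 → E3) (x : E3) : Matrix (Fin 3) (Fin 3) ℝ :=
  fun i j => (jac u x i j + jac u x j i) / 2

/-- divergence (trace of Jacobian) -/
def div3 (u : E3 → E3) (x : E3) : ℝ := ∑ i, jac u x i i

/-- divergence of the strain tensor: j-th component Σᵢ ∂ᵢ ε(u)ᵢⱼ -/
def divStrain (u : E3 → E3) (x : E3) : E3 :=
  fun j => ∑ i, fderiv ℝ (fun y => strain u y i j) x (sb i)

/-- convective term (a·∇)b = Db (a) -/
def conv (a b : E3 → E3) (x : E3) : E3 := fderiv ℝ b x (a x)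

/-- gradient of a scalar field -/
def grad3 (p : E3 → ℝ) (x : E3) : E3 := fun i => fderiv ℝ p x (sb i)

/-- Poincaré flow -/
def uP (β ε : ℝ) (x : E3) : E3 :=
  ![-(x 1), x 0 - (2 * ε / β) * (1 + β) * x 2, (2 * ε / β) * x 1]

/-- level function of the spheroid -/
def phi (β : ℝ) (x : E3) : ℝ := (x 0) ^ 2 + (x 1) ^ 2 + (1 + β) * (x 2) ^ 2 - 1

/-- gradient of φ -/
def gradPhi (β : ℝ) (x : E3) : E3 := ![2 * x 0, 2 * x 1, 2 * (1 + β) * x 2]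

/-- the spheroid Ω_β -/
def Omega (β : ℝ) : Set E3 := {x | phi β x < 0}

/-- componentwise Laplacian -/
def lap3 (u : E3 → E3) (x : E3) : E3 :=
  fun j => ∑ i, fderiv ℝ (fun y => jac u y j i) x (sb i)


/-! Both `u_P` and `u` are linear fields `x ↦ A x` with `A = [[0,-a,0],[a,0,-c],[0,k,0]]`, where
`a = 1` resp. `a = 1 + ω`, `k = 2ϵ/β` and `c = (1+β)k`. The Jacobian is the constant `A`, so
`div u = tr A = 0`, `div ε(u) = 0`, and `ε(u) = (A + Aᵀ)/2` does not see the rotation rate `a`.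
For a linear field `(u·∇)u + Ω × u = (A² + [Ω]ₓA) x`, which is a gradient exactly when
`A² + [Ω]ₓA` is symmetric, the pressure then being the quadratic form `-½ xᵀ(A² + [Ω]ₓA)x`.
For `Ω = 2ϵ e_x` symmetry reduces to `a (c - k - 2ϵ) = 0`, which holds because `βk = 2ϵ`. -/

open Matrix

def linField (A : Matrix (Fin 3) (Fin 3) ℝ) : E3 →L[ℝ] E3 :=
  LinearMap.toContinuousLinearMap A.mulVecLin

@[simp] lemma linField_apply (A : Matrix (Fin 3) (Fin 3) ℝ) (x : E3) : linField A x = A *ᵥ x :=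
  rfl

lemma jac_linField (A : Matrix (Fin 3) (Fin 3) ℝ) (x : E3) : jac (linField A) x = A := by
  ext i j
  simp [jac, sb, ContinuousLinearMap.fderiv]

lemma div3_linField (A : Matrix (Fin 3) (Fin 3) ℝ) (x : E3) : div3 (linField A) x = A.trace := by
  simp [div3, jac_linField, trace]

lemma strain_linField (A : Matrix (Fin 3) (Fin 3) ℝ) (x : E3) :
    strain (linField A) x = fun i j => (A i j + A j i) / 2 := by
  funext i j
  simp only [strain, jac_linField]

lemma divStrain_linField (A : Matrix (Fin 3) (Fin 3) ℝ) (x : E3) :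
    divStrain (linField A) x = 0 := by
  funext j
  simp [divStrain, strain_linField]

lemma conv_linField (A : Matrix (Fin 3) (Fin 3) ℝ) (x : E3) :
    conv (linField A) (linField A) x = (A * A) *ᵥ x := by
  simp [conv, ContinuousLinearMap.fderiv, mulVec_mulVec]

lemma smul_cross3 (r : ℝ) (a b : E3) : cross3 (r • a) b = r • cross3 a b :=
  LinearMap.map_smul₂ (crossProduct (R := ℝ)) r a b

def crossMatrix (v : E3) : Matrix (Fin 3) (Fin 3) ℝ :=
  !![0, -v 2, v 1; v 2, 0, -v 0; -v 1, v 0, 0]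

lemma cross3_eq_crossMatrix_mulVec (v w : E3) : cross3 v w = crossMatrix v *ᵥ w := by
  funext i
  fin_cases i <;> simp [cross3, crossMatrix, mulVec, dotProduct, Fin.sum_univ_three] <;> ring

def dotCLM (v : E3) : E3 →L[ℝ] ℝ := ∑ i, v i • ContinuousLinearMap.proj i

lemma hasFDerivAt_half_dot3_mulVec {B : Matrix (Fin 3) (Fin 3) ℝ} (hB : B.IsSymm) (x : E3) :
    HasFDerivAt (fun y => dot3 (B *ᵥ y) y / 2) (dotCLM (B *ᵥ x)) x := by
  have h : ∀ i ∈ Finset.univ, HasFDerivAt (fun y : E3 => (B *ᵥ y) i * y i)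
      ((B *ᵥ x) i • ContinuousLinearMap.proj i
        + x i • (ContinuousLinearMap.proj i).comp (linField B)) x := fun i _ =>
    ((ContinuousLinearMap.proj i).comp (linField B)).hasFDerivAt.mul (hasFDerivAt_apply i x)
  have hfun : (fun y => dot3 (B *ᵥ y) y / 2) = fun y => (∑ i, (B *ᵥ y) i * y i) * (1 / 2) := by
    funext y
    rw [dot3, div_eq_mul_one_div]
  rw [hfun]
  refine ((HasFDerivAt.sum h).mul_const (1 / 2 : ℝ)).congr_fderiv ?_
  ext h
  have hsymm : x ⬝ᵥ (B *ᵥ h) = B *ᵥ x ⬝ᵥ h := by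
    rw [dotProduct_mulVec, ← mulVec_transpose, hB.eq]
  simp [dotCLM, Finset.sum_add_distrib]
  change 2⁻¹ * (B *ᵥ x ⬝ᵥ h) + 2⁻¹ * (x ⬝ᵥ B *ᵥ h) = B *ᵥ x ⬝ᵥ h
  rw [hsymm]
  ring

lemma grad3_eq_of_hasFDerivAt {p : E3 → ℝ} {v x : E3} (h : HasFDerivAt p (dotCLM v) x) :
    grad3 p x = v := by
  funext i
  simp [grad3, h.fderiv, dotCLM, sb, Pi.single_apply]

lemma exists_pressure_linField (A : Matrix (Fin 3) (Fin 3) ℝ) (Ω : E3)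
    (hA : (A * A + crossMatrix Ω * A).IsSymm) :
    ∃ p : E3 → ℝ, Differentiable ℝ p ∧
      ∀ x, conv (linField A) (linField A) x + cross3 Ω (linField A x) + grad3 p x = 0 := by
  set B := A * A + crossMatrix Ω * A
  have hp : ∀ x, HasFDerivAt (fun y => dot3 (-B *ᵥ y) y / 2) (dotCLM (-B *ᵥ x)) x :=
    hasFDerivAt_half_dot3_mulVec hA.neg
  refine ⟨_, fun x => (hp x).differentiableAt, fun x => ?_⟩
  rw [grad3_eq_of_hasFDerivAt (hp x), conv_linField, linField_apply, cross3_eq_crossMatrix_mulVec,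
    mulVec_mulVec, ← add_mulVec, neg_mulVec, add_neg_cancel]

def poincareMatrix (a c k : ℝ) : Matrix (Fin 3) (Fin 3) ℝ :=
  !![0, -a, 0; a, 0, -c; 0, k, 0]

lemma trace_poincareMatrix (a c k : ℝ) : (poincareMatrix a c k).trace = 0 := by
  simp [poincareMatrix, trace_fin_three]

lemma strain_poincareMatrix (a a' c k : ℝ) (x : E3) :
    strain (linField (poincareMatrix a c k)) x = strain (linField (poincareMatrix a' c k)) x := by
  rw [strain_linField, strain_linField]
  funext i j
  fin_cases i <;> fin_cases j <;> simp [poincareMatrix]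

lemma dot3_poincareMatrix_gradPhi (a k β : ℝ) (x : E3) :
    dot3 (poincareMatrix a (k * (1 + β)) k *ᵥ x) (gradPhi β x) = 0 := by
  simp [dot3, poincareMatrix, gradPhi, Fin.sum_univ_three, mulVec, dotProduct]
  ring

lemma isSymm_poincareMatrix_precession (a k ε : ℝ) :
    (poincareMatrix a (k + 2 * ε) k * poincareMatrix a (k + 2 * ε) k
      + crossMatrix ((2 * ε) • sb 0) * poincareMatrix a (k + 2 * ε) k).IsSymm := by
  ext i j
  fin_cases i <;> fin_cases j <;> simp [poincareMatrix, crossMatrix, sb] <;> ring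

theorem stmt_0_general (β ε ν ω : ℝ) (hβ0 : β ≠ 0)
    (w : E3 → E3) (hw : w = fun x => ω • cross3 (sb 2) x)
    (u : E3 → E3) (hu : u = fun x => uP β ε x + w x) :
    (∀ x : E3, div3 u x = 0) ∧
    (∀ x : E3, strain u x = strain (uP β ε) x) ∧
    (∀ x : E3, divStrain u x = 0) ∧
    (∀ x : E3, dot3 (u x) (gradPhi β x) = 0) ∧
    (∃ p : E3 → ℝ, Differentiable ℝ p ∧
      ∀ x : E3, conv u u x - (2 * ν) • divStrain u x
        + (2 * ε) • cross3 (sb 0) (u x) + grad3 p x = 0) := by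
  set k := 2 * ε / β
  have hP : uP β ε = linField (poincareMatrix 1 (k * (1 + β)) k) := by
    funext x i
    fin_cases i <;> simp [uP, poincareMatrix, mulVec, dotProduct, Fin.sum_univ_three, k]
    ring
  have hu' : u = linField (poincareMatrix (1 + ω) (k * (1 + β)) k) := by
    subst hu hw
    funext x i
    fin_cases i <;>
      simp [uP, cross3, sb, poincareMatrix, mulVec, dotProduct, Fin.sum_univ_three, k] <;> ring
  have hc : k * (1 + β) = k + 2 * ε := by
    simp only [k]
    field_simp
  subst hu'
  refine ⟨fun x => by rw [div3_linField, trace_poincareMatrix],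
    fun x => by rw [hP, strain_poincareMatrix], divStrain_linField _,
    dot3_poincareMatrix_gradPhi _ _ _, ?_⟩
  rw [hc]
  obtain ⟨p, hp, hsteady⟩ :=
    exists_pressure_linField _ _ (isSymm_poincareMatrix_precession (1 + ω) k ε)
  refine ⟨p, hp, fun x => ?_⟩
  rw [divStrain_linField, smul_zero, sub_zero, ← smul_cross3]
  exact hsteady x

/-- For β > −1, β ≠ 0, any precession rate ϵ, viscosity ν and rotation rate ω,
the field u = u_P + ω e_z × x is divergence free, has the same strain (hence the same
tangential boundary stress) as the Poincaré flow, has div ε(u) = 0, is tangent to the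
boundary of the spheroid Ω_β, and solves the steady precessing Navier–Stokes equations
for some pressure p.  Hence the Poincaré flow is not an isolated steady state. -/
theorem stmt_0 (β ε ν ω : ℝ) (hβ : -1 < β) (hβ0 : β ≠ 0)
    (w : E3 → E3) (hw : w = fun x => ω • cross3 (sb 2) x)
    (u : E3 → E3) (hu : u = fun x => uP β ε x + w x) :
    (∀ x : E3, div3 u x = 0) ∧
    (∀ x : E3, strain u x = strain (uP β ε) x) ∧
    (∀ x : E3, divStrain u x = 0) ∧
    (∀ x : E3, dot3 (u x) (gradPhi β x) = 0) ∧
    (∃ p : E3 → ℝ, Differentiable ℝ p ∧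
      ∀ x : E3, conv u u x - (2 * ν) • divStrain u x
        + (2 * ε) • cross3 (sb 0) (u x) + grad3 p x = 0) :=
  stmt_0_general β ε ν ω hβ0 w hw u hu
end
end

section
/- Let β > −1 with β ≠ 0, ϵ ∈ ℝ, and ω ∈ ℝ. Define w(x) := ω e_z × x and q(x,y,z) := −ω(x² + y²) + (2ϵω/β)(1+β)·x·z. Then for every point x ∈ ℝ³, (u_P·∇)w(x) + (w·∇)u_P(x) + 2ϵ e_x × w(x) = ∇q(x). -/
open MeasureTheory

noncomputable section

/-! Both `w` and `u_P` are linear, so each convective term is one field applied to the other, and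
`q` is the quadratic form of a matrix `Q`, with gradient `(Q + Qᵀ) x`. The claim becomes an
identity between linear functions of `x`, checked coordinatewise. -/

open Matrix

theorem fderiv_dotProduct_mulVec {n : Type*} [Fintype n] (M : Matrix n n ℝ) (x h : n → ℝ) :
    fderiv ℝ (fun y => y ⬝ᵥ M *ᵥ y) x h = ((M + Mᵀ) *ᵥ x) ⬝ᵥ h := by
  let B : (n → ℝ) →L[ℝ] (n → ℝ) →L[ℝ] ℝ :=
    LinearMap.toContinuousLinearMap
      (LinearMap.toContinuousLinearMap.toLinearMap ∘ₗ dotProductBilin ℝ ℝ)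
  let A : (n → ℝ) →L[ℝ] (n → ℝ) := LinearMap.toContinuousLinearMap M.mulVecLin
  have hderiv : HasFDerivAt (fun y => y ⬝ᵥ M *ᵥ y) _ x :=
    B.hasFDerivAt_of_bilinear (hasFDerivAt_id x) A.hasFDerivAt
  rw [hderiv.fderiv]
  simp only [B, A, add_mulVec, add_dotProduct]
  simp [dotProduct_mulVec, vecMul_transpose, dotProduct_comm, add_comm]

theorem grad3_dotProduct_mulVec (M : Matrix (Fin 3) (Fin 3) ℝ) (x : E3) :
    grad3 (fun y => y ⬝ᵥ M *ᵥ y) x = (M + Mᵀ) *ᵥ x := by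
  ext i
  simp [grad3, fderiv_dotProduct_mulVec, sb]

theorem conv_linearMap (a : E3 → E3) (L : E3 →ₗ[ℝ] E3) (x : E3) : conv a L x = L (a x) := by
  rw [conv, show ⇑L = ⇑(LinearMap.toContinuousLinearMap L) from rfl, ContinuousLinearMap.fderiv]

def uPMatrix (β ε : ℝ) : Matrix (Fin 3) (Fin 3) ℝ :=
  !![0, -1, 0; 1, 0, -(2 * ε / β) * (1 + β); 0, 2 * ε / β, 0]

theorem uP_eq_mulVecLin (β ε : ℝ) : uP β ε = ⇑(uPMatrix β ε).mulVecLin := by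
  ext x i
  fin_cases i <;> simp [uP, uPMatrix, mulVec, dotProduct, Fin.sum_univ_three]
  ring

def pressureMatrix (β ε ω : ℝ) : Matrix (Fin 3) (Fin 3) ℝ :=
  !![-ω, 0, (2 * ε * ω / β) * (1 + β); 0, -ω, 0; 0, 0, 0]

theorem stmt_3_general (β ε ω : ℝ) (hβ0 : β ≠ 0)
    (w : E3 → E3) (hw : w = fun x => ω • cross3 (sb 2) x)
    (q : E3 → ℝ)
    (hq : q = fun x => -ω * ((x 0) ^ 2 + (x 1) ^ 2)
      + (2 * ε * ω / β) * (1 + β) * (x 0) * (x 2)) :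
    ∀ x : E3, conv (uP β ε) w x + conv w (uP β ε) x
      + (2 * ε) • cross3 (sb 0) (w x) = grad3 q x := by
  intro x
  have hw_lin : w = ⇑(ω • crossProduct (sb 2)) := hw
  have hq_quad : q = fun y => y ⬝ᵥ pressureMatrix β ε ω *ᵥ y := by
    rw [hq]; ext y
    simp [pressureMatrix, mulVec, dotProduct, Fin.sum_univ_three]
    ring
  have h_conv_w : conv (uP β ε) w x = ω • cross3 (sb 2) (uP β ε x) := by
    rw [hw_lin, conv_linearMap]; rfl
  have h_conv_uP : conv w (uP β ε) x = uP β ε (w x) := by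
    rw [uP_eq_mulVecLin, conv_linearMap]
  rw [h_conv_w, h_conv_uP, hq_quad, grad3_dotProduct_mulVec, hw]
  -- the `z`-components agree because `(2ε/β)(1 + β) = 2ε/β + 2ε`
  ext i
  fin_cases i <;> simp [uP, pressureMatrix, cross3, sb, mulVec, dotProduct, Fin.sum_univ_three] <;>
    field_simp
  ring

/-- with w = ω e_z × x and
q(x,y,z) = −ω(x²+y²) + (2ϵω/β)(1+β) x z, one has
(u_P·∇)w + (w·∇)u_P + 2ϵ e_x × w = ∇q everywhere. -/
theorem stmt_3 (β ε ω : ℝ) (hβ : -1 < β) (hβ0 : β ≠ 0)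
    (w : E3 → E3) (hw : w = fun x => ω • cross3 (sb 2) x)
    (q : E3 → ℝ)
    (hq : q = fun x => -ω * ((x 0) ^ 2 + (x 1) ^ 2)
      + (2 * ε * ω / β) * (1 + β) * (x 0) * (x 2)) :
    ∀ x : E3, conv (uP β ε) w x + conv w (uP β ε) x
      + (2 * ε) • cross3 (sb 0) (w x) = grad3 q x :=
  stmt_3_general β ε ω hβ0 w hw q hq
end
end

section
/- Let u : ℝ³ → ℝ³ be a continuously differentiable, compactly supported vector field with div u(x) = 0 for every x. Then ∫_{ℝ³} (e_z × x)·((u·∇)u(x)) dx = 0; that is, the convective term exerts no torque about the z-axis. -/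
/-! The integrand is the derivative along `u` of the angular momentum density
`m = x₀ u₁ - x₁ u₀ = (x × u)_z`: differentiating `x × u` in the direction `u` gives
`u × u + x × (u·∇)u`, and `u × u = 0`. Integrating by parts,
`∫ Dm (u) = -∫ m div u = 0`. -/

open MeasureTheory

noncomputable section

theorem integral_fderiv_mul_eq_neg_integral_mul_fderiv {E : Type*} [NormedAddCommGroup E]
    [NormedSpace ℝ E] [FiniteDimensional ℝ E] [MeasurableSpace E] [BorelSpace E]
    {μ : Measure E} [μ.IsAddHaarMeasure] {f g : E → ℝ} (hf : ContDiff ℝ 1 f)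
    (hg : ContDiff ℝ 1 g) (hgs : HasCompactSupport g) (v : E) :
    ∫ x, fderiv ℝ f x v * g x ∂μ = -∫ x, f x * fderiv ℝ g x v ∂μ := by
  have hf' : Continuous (fderiv ℝ f · v) :=
    (hf.continuous_fderiv one_ne_zero).clm_apply continuous_const
  have hg' : Continuous (fderiv ℝ g · v) :=
    (hg.continuous_fderiv one_ne_zero).clm_apply continuous_const
  rw [integral_mul_fderiv_eq_neg_fderiv_mul_of_integrable, neg_neg]
  · exact (hf'.mul hg.continuous).integrable_of_hasCompactSupport hgs.mul_left
  · exact (hf.continuous.mul hg').integrable_of_hasCompactSupport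
      (hgs.fderiv_apply (𝕜 := ℝ) v).mul_left
  · exact (hf.continuous.mul hg.continuous).integrable_of_hasCompactSupport hgs.mul_left
  · exact fun x _ => hf.differentiable one_ne_zero x
  · exact fun x _ => hg.differentiable one_ne_zero x

theorem clm_apply_eq_sum_sb (L : E3 →L[ℝ] ℝ) (w : E3) : L w = ∑ i, L (sb i) * w i := by
  conv_lhs => rw [pi_eq_sum_univ' w]
  simp [sb, mul_comm]

theorem div3_eq_sum_fderiv_apply {w : E3 → E3} {x : E3} (hw : DifferentiableAt ℝ w x) :
    div3 w x = ∑ i, fderiv ℝ (fun y => w y i) x (sb i) := by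
  simp [div3, jac, fderiv_apply hw]

theorem integral_fderiv_apply_eq_neg_integral_mul_div3 {f : E3 → ℝ} {w : E3 → E3}
    (hf : ContDiff ℝ 1 f) (hw : ContDiff ℝ 1 w) (hws : HasCompactSupport w) :
    ∫ x, fderiv ℝ f x (w x) = -∫ x, f x * div3 w x := by
  have hwi (i : Fin 3) : ContDiff ℝ 1 (fun y => w y i) := contDiff_pi.mp hw i
  have hwis (i : Fin 3) : HasCompactSupport (fun y => w y i) :=
    hws.comp_left (g := fun v : E3 => v i) rfl
  have hint_left (i : Fin 3) : Integrable (fun x => fderiv ℝ f x (sb i) * w x i) :=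
    (((hf.continuous_fderiv one_ne_zero).clm_apply continuous_const).mul
      (hwi i).continuous).integrable_of_hasCompactSupport (hwis i).mul_left
  have hint_right (i : Fin 3) : Integrable (fun x => f x * fderiv ℝ (fun y => w y i) x (sb i)) :=
    (hf.continuous.mul (((hwi i).continuous_fderiv one_ne_zero).clm_apply
      continuous_const)).integrable_of_hasCompactSupport
      ((hwis i).fderiv_apply (𝕜 := ℝ) _).mul_left
  calc ∫ x, fderiv ℝ f x (w x)
      = ∑ i, ∫ x, fderiv ℝ f x (sb i) * w x i := by
        simp_rw [clm_apply_eq_sum_sb (fderiv ℝ f _) (w _)]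
        exact integral_finsetSum _ fun i _ => hint_left i
    _ = -∑ i, ∫ x, f x * fderiv ℝ (fun y => w y i) x (sb i) := by
        simp only [integral_fderiv_mul_eq_neg_integral_mul_fderiv hf (hwi _) (hwis _),
          Finset.sum_neg_distrib]
    _ = -∫ x, f x * div3 w x := by
        simp_rw [div3_eq_sum_fderiv_apply (hw.differentiable one_ne_zero _), Finset.mul_sum]
        rw [integral_finsetSum _ fun i _ => hint_right i]

def angMomZ (u : E3 → E3) (y : E3) : ℝ := y 0 * u y 1 - y 1 * u y 0

theorem fderiv_angMomZ_apply_self {u : E3 → E3} {x : E3} (hu : DifferentiableAt ℝ u x) :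
    fderiv ℝ (angMomZ u) x (u x) = dot3 (cross3 (sb 2) x) (conv u u x) := by
  have hcomp (i : Fin 3) : DifferentiableAt ℝ (fun y => u y i) x := by fun_prop
  unfold angMomZ
  rw [fderiv_fun_sub (by fun_prop) (by fun_prop), fderiv_fun_mul (by fun_prop) (hcomp 1),
    fderiv_fun_mul (by fun_prop) (hcomp 0), fderiv_apply hu, fderiv_apply hu,
    fderiv_apply differentiableAt_id, fderiv_apply differentiableAt_id]
  simp only [fderiv_fun_id, ContinuousLinearMap.comp_id, sub_apply,
    add_apply, smul_apply, ContinuousLinearMap.comp_apply,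
    ContinuousLinearMap.proj_apply, smul_eq_mul, dot3, cross3, conv, sb, Fin.sum_univ_three,
    Pi.single_eq_of_ne, Pi.single_eq_same, Matrix.cons_val_zero, Matrix.cons_val_one,
    Matrix.cons_val, ne_eq, Fin.reduceEq, not_false_eq_true]
  ring

/-- for a C¹ compactly supported divergence-free field u, the convective
term exerts no torque about the z-axis: ∫ (e_z × x)·((u·∇)u) = 0. -/
theorem stmt_10 (u : E3 → E3) (hu : ContDiff ℝ 1 u) (hsupp : HasCompactSupport u)
    (hdiv : ∀ x : E3, div3 u x = 0) :
    ∫ x : E3, dot3 (cross3 (sb 2) x) (conv u u x) = 0 := by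
  have hm : ContDiff ℝ 1 (angMomZ u) := by unfold angMomZ; fun_prop
  calc ∫ x, dot3 (cross3 (sb 2) x) (conv u u x)
      = ∫ x, fderiv ℝ (angMomZ u) x (u x) := by
        simp only [fderiv_angMomZ_apply_self (hu.differentiable one_ne_zero _)]
    _ = -∫ x, angMomZ u x * div3 u x :=
        integral_fderiv_apply_eq_neg_integral_mul_div3 hm hu hsupp
    _ = 0 := by simp [hdiv]
end
end

section
/- Let φ : ℝ³ → ℝ³ be a continuously differentiable, compactly supported vector field with div φ(x) = 0 for every x, and let w(x) := e_z × x. Then ∫_{ℝ³} (Dφ(x)(w(x)))·w(x) dx = 0; that is, the contraction of the tensor w ⊗ w against the Jacobian of φ integrates to zero. -/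
/-!
For `w = a × x`, the field `Ψ = ½|w|² φ + (φ·w) w` satisfies `div Ψ = Dφ(w)·w + ½|w|² div φ`.
Indeed, by the product rule
`div Ψ = ∇(½|w|²)·φ + ½|w|² div φ + Dφ(w)·w + φ·Dw(w) + (φ·w) div w`,
where `div w = 0`, and `∇(½|w|²)·φ + φ·Dw(w) = (a × φ)·w + φ·(a × w) = 0` because `v ↦ a × v`
is skew. So for divergence-free `φ` the integrand is the divergence of a compactly supported `C¹`
field, and the integral of each partial derivative of such a field vanishes.
-/

open MeasureTheory

noncomputable section

open Matrix

section IntegralOfDerivative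

variable {E G : Type*} [NormedAddCommGroup E] [NormedSpace ℝ E] [MeasurableSpace E] [BorelSpace E]
  {μ : Measure E} [NormedAddCommGroup G] [NormedSpace ℝ G]

theorem integrable_fderiv_apply [IsFiniteMeasureOnCompacts μ] {f : E → G} (hf : ContDiff ℝ 1 f)
    (hfc : HasCompactSupport f) (v : E) : Integrable (fun x => fderiv ℝ f x v) μ :=
  ((hf.continuous_fderiv one_ne_zero).clm_apply continuous_const).integrable_of_hasCompactSupport
    (hfc.fderiv_apply ℝ v)

theorem integral_fderiv_apply_eq_zero [FiniteDimensional ℝ E] [μ.IsAddHaarMeasure] {f : E → G}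
    (hf : ContDiff ℝ 1 f) (hfc : HasCompactSupport f) (v : E) : ∫ x, fderiv ℝ f x v ∂μ = 0 := by
  have := integral_smul_fderiv_eq_neg_fderiv_smul_of_integrable (μ := μ) (f := fun _ => (1 : ℝ))
    (g := f) (v := v) (by simp) (by simpa using integrable_fderiv_apply hf hfc v)
    (by simpa using hf.continuous.integrable_of_hasCompactSupport hfc)
    (fun _ _ => differentiableAt_const _) (fun x _ => hf.differentiable one_ne_zero x)
  simpa using this

end IntegralOfDerivative

theorem fderiv_dotProduct_apply {𝕜 E ι : Type*} [NontriviallyNormedField 𝕜]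
    [NormedAddCommGroup E] [NormedSpace 𝕜 E] [Fintype ι] {f g : E → ι → 𝕜} {x : E}
    (hf : DifferentiableAt 𝕜 f x) (hg : DifferentiableAt 𝕜 g x) (v : E) :
    fderiv 𝕜 (fun y => f y ⬝ᵥ g y) x v = fderiv 𝕜 f x v ⬝ᵥ g x + f x ⬝ᵥ fderiv 𝕜 g x v := by
  have hfi : ∀ i, DifferentiableAt 𝕜 (fun y => f y i) x := differentiableAt_pi.1 hf
  have hgi : ∀ i, DifferentiableAt 𝕜 (fun y => g y i) x := differentiableAt_pi.1 hg
  have hprod : ∀ i, fderiv 𝕜 (fun y => f y i * g y i) x v =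
      fderiv 𝕜 f x v i * g x i + f x i * fderiv 𝕜 g x v i := fun i => by
    simp [fderiv_fun_mul (hfi i) (hgi i), fderiv_apply hf, fderiv_apply hg]
    ring
  simp only [dotProduct]
  rw [fderiv_fun_sum (u := Finset.univ) (A := fun i y => f y i * g y i)
    fun i _ => (hfi i).mul (hgi i)]
  simp only [_root_.sum_apply, hprod, Finset.sum_add_distrib]

theorem fderiv_crossProduct_apply {𝕜 : Type*} [NontriviallyNormedField 𝕜] [CompleteSpace 𝕜]
    (a x v : Fin 3 → 𝕜) : fderiv 𝕜 (fun y => a ⨯₃ y) x v = a ⨯₃ v := by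
  change fderiv 𝕜 (crossProduct a).toContinuousLinearMap x v = _
  rw [ContinuousLinearMap.fderiv]
  rfl

theorem contDiff_crossProduct {𝕜 : Type*} [NontriviallyNormedField 𝕜] [CompleteSpace 𝕜]
    (a : Fin 3 → 𝕜) {n : WithTop ℕ∞} : ContDiff 𝕜 n fun y => a ⨯₃ y :=
  (crossProduct a).toContinuousLinearMap.contDiff

section Divergence

variable {F G : E3 → E3} {c : E3 → ℝ} {x : E3}

theorem div3_add (hF : DifferentiableAt ℝ F x) (hG : DifferentiableAt ℝ G x) :
    div3 (fun y => F y + G y) x = div3 F x + div3 G x := by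
  simp [div3, jac, fderiv_fun_add hF hG, Finset.sum_add_distrib]

theorem div3_smul (hc : DifferentiableAt ℝ c x) (hF : DifferentiableAt ℝ F x) :
    div3 (fun y => c y • F y) x = fderiv ℝ c x (F x) + c x * div3 F x := by
  have hFx : F x = ∑ i, F x i • sb i := by
    ext j
    simp [sb, Pi.single_apply]
  conv_lhs => simp only [div3, jac, fderiv_fun_smul hc hF]
  conv_rhs => rw [hFx]
  simp [div3, jac, Finset.sum_add_distrib, Finset.mul_sum, mul_comm, add_comm]

theorem div3_crossProduct (a x : E3) : div3 (fun y => a ⨯₃ y) x = 0 := by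
  simp only [div3, jac, fderiv_crossProduct_apply]
  simp [Fin.sum_univ_three, cross_apply, sb]

end Divergence

def rotationFlux (a : E3) (φ : E3 → E3) (y : E3) : E3 :=
  ((a ⨯₃ y) ⬝ᵥ (a ⨯₃ y) / 2) • φ y + (φ y ⬝ᵥ a ⨯₃ y) • a ⨯₃ y

theorem contDiff_rotationFlux (a : E3) {φ : E3 → E3} {n : WithTop ℕ∞} (hφ : ContDiff ℝ n φ) :
    ContDiff ℝ n (rotationFlux a φ) := by
  have hw := contDiff_crossProduct a (n := n)
  unfold rotationFlux
  simp only [dotProduct]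
  fun_prop

theorem hasCompactSupport_rotationFlux (a : E3) {φ : E3 → E3} (hφ : HasCompactSupport φ) :
    HasCompactSupport (rotationFlux a φ) :=
  hφ.mono fun y hy hφy => hy (by simp [rotationFlux, hφy])

theorem div3_rotationFlux (a : E3) {φ : E3 → E3} {x : E3} (hφ : DifferentiableAt ℝ φ x) :
    div3 (rotationFlux a φ) x =
      fderiv ℝ φ x (a ⨯₃ x) ⬝ᵥ a ⨯₃ x + (a ⨯₃ x) ⬝ᵥ (a ⨯₃ x) / 2 * div3 φ x := by
  have hw : DifferentiableAt ℝ (fun y => a ⨯₃ y) x :=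
    (contDiff_crossProduct a (n := 1)).differentiable one_ne_zero x
  have hww : DifferentiableAt ℝ (fun y => (a ⨯₃ y) ⬝ᵥ (a ⨯₃ y)) x := by
    simp only [dotProduct]; fun_prop
  have hq : DifferentiableAt ℝ (fun y => (a ⨯₃ y) ⬝ᵥ (a ⨯₃ y) / 2) x := by fun_prop
  have hg : DifferentiableAt ℝ (fun y => φ y ⬝ᵥ a ⨯₃ y) x := by
    simp only [dotProduct]; fun_prop
  have hskew : (a ⨯₃ φ x) ⬝ᵥ (a ⨯₃ x) + φ x ⬝ᵥ a ⨯₃ (a ⨯₃ x) = 0 := by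
    rw [dotProduct_comm, triple_product_permutation, triple_product_permutation (φ x),
      ← dotProduct_add, cross_anticomm', dotProduct_zero]
  have hDq : fderiv ℝ (fun y => (a ⨯₃ y) ⬝ᵥ (a ⨯₃ y) / 2) x (φ x) = (a ⨯₃ φ x) ⬝ᵥ (a ⨯₃ x) := by
    simp only [div_eq_mul_inv]
    rw [fderiv_mul_const hww, _root_.smul_apply, fderiv_dotProduct_apply hw hw,
      fderiv_crossProduct_apply, dotProduct_comm (a ⨯₃ x)]
    simp only [smul_eq_mul]
    ring
  have hDg : fderiv ℝ (fun y => φ y ⬝ᵥ a ⨯₃ y) x (a ⨯₃ x) =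
      fderiv ℝ φ x (a ⨯₃ x) ⬝ᵥ a ⨯₃ x + φ x ⬝ᵥ a ⨯₃ (a ⨯₃ x) := by
    rw [fderiv_dotProduct_apply hφ hw, fderiv_crossProduct_apply]
  unfold rotationFlux
  rw [div3_add (hq.fun_smul hφ) (hg.fun_smul hw), div3_smul hq hφ, div3_smul hg hw,
    div3_crossProduct, hDq, hDg]
  linear_combination hskew

theorem integral_div3_eq_zero {Ψ : E3 → E3} (hΨ : ContDiff ℝ 1 Ψ) (hc : HasCompactSupport Ψ) :
    ∫ x, div3 Ψ x = 0 := by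
  have hΨi : ∀ i, ContDiff ℝ 1 fun y => Ψ y i := contDiff_pi.1 hΨ
  have hci : ∀ i, HasCompactSupport fun y => Ψ y i :=
    fun i => hc.comp_left (g := fun v : E3 => v i) rfl
  have hjac : ∀ i x, jac Ψ x i i = fderiv ℝ (fun y => Ψ y i) x (sb i) := fun i x => by
    simp [jac, fderiv_apply (hΨ.differentiable one_ne_zero x)]
  simp only [div3, hjac]
  rw [integral_finsetSum _ fun i _ => integrable_fderiv_apply (hΨi i) (hci i) (sb i)]
  simp [integral_fderiv_apply_eq_zero (hΨi _) (hci _)]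

/-- for a C¹ compactly supported divergence-free field φ and
w(x) = e_z × x, the contraction of w ⊗ w against the Jacobian of φ integrates to zero:
∫ (Dφ(w))·w = 0. -/
theorem stmt_11 (φ : E3 → E3) (hφ : ContDiff ℝ 1 φ) (hsupp : HasCompactSupport φ)
    (hdiv : ∀ x : E3, div3 φ x = 0)
    (w : E3 → E3) (hw : w = fun x => cross3 (sb 2) x) :
    ∫ x : E3, dot3 (fderiv ℝ φ x (w x)) (w x) = 0 := by
  subst hw
  have hflux := integral_div3_eq_zero (contDiff_rotationFlux (sb 2) hφ)
    (hasCompactSupport_rotationFlux (sb 2) hsupp)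
  simp only [div3_rotationFlux (sb 2) (hφ.differentiable one_ne_zero _), hdiv, mul_zero,
    add_zero] at hflux
  -- `cross3` and `dot3` unfold to `⨯₃` and `⬝ᵥ`
  exact hflux
end
end
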